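/- Let g ∈ L¹(ℝ^d) ∩ L²(ℝ^d). Then there exists a sequence of Schwartz functions φ_n such that the Fourier transforms 𝓕φ_n are uniformly bounded in L^∞(ℝ^d) and ∫ g(x) · 𝓕φ_n(x) dx → ‖g‖_{L¹} as n → ∞. -/

import Mathlib

/-! Since `g · conj g / |g| = |g|`, it suffices to approximate `conj g / |g|` almost everywhere
by smooth compactly supported functions bounded by `1` (mollify, then cut off). These are
Schwartz functions, hence Fourier transforms of Schwartz functions, and dominated convergence
against `g ∈ L¹` gives the limit `‖g‖_{L¹}`. -/

open MeasureTheory Filter Complex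

noncomputable section

/-- The Fourier transform with normalization `(2π)^{-d/2} ∫ e^{-ix·ξ} f(x) dx`. -/
def FT (d : ℕ) (f : EuclideanSpace ℝ (Fin d) → ℂ) (ξ : EuclideanSpace ℝ (Fin d)) : ℂ :=
  (2 * Real.pi : ℂ) ^ (-(d : ℂ) / 2) * ∫ x, Complex.exp (-Complex.I * ((inner ℝ x ξ : ℝ) : ℂ)) * f x

open scoped FourierTransform RealInnerProductSpace ContDiff Convolution Topology
open ContinuousLinearMap (lsmul)
open scoped ComplexConjugate

-- equal to `0` at `z = 0` since `x / 0 = 0`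
def conjSign (z : ℂ) : ℂ := conj z / ‖z‖

lemma norm_conjSign_le_one (z : ℂ) : ‖conjSign z‖ ≤ 1 := by
  simpa [conjSign] using div_self_le_one ‖z‖

lemma mul_conjSign (z : ℂ) : z * conjSign z = ‖z‖ := by
  rcases eq_or_ne z 0 with rfl | hz
  · simp [conjSign]
  · rw [conjSign, mul_div_assoc', mul_conj, normSq_eq_norm_sq, ofReal_pow,
      div_eq_iff (ofReal_ne_zero.2 (norm_ne_zero_iff.2 hz)), sq]

lemma measurable_conjSign : Measurable conjSign := by
  unfold conjSign; fun_prop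

section Approximation

variable {E F : Type*} [NormedAddCommGroup E] [NormedSpace ℝ E] [FiniteDimensional ℝ E]
  [MeasurableSpace E] [BorelSpace E] {μ : Measure E} [μ.IsAddHaarMeasure]
  [NormedAddCommGroup F] [NormedSpace ℝ F] [CompleteSpace F]

lemma ContDiffBump.norm_normed_convolution_le (φ : ContDiffBump (0 : E)) {f : E → F}
    (hf : AEStronglyMeasurable f μ) {C : ℝ} (hC : ∀ x, ‖f x‖ ≤ C) (x : E) :
    ‖(φ.normed μ ⋆[lsmul ℝ ℝ, μ] f) x‖ ≤ C := by
  simpa using dist_convolution_le (z₀ := 0) ((norm_nonneg _).trans (hC 0))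
    φ.support_normed_eq.subset φ.nonneg_normed φ.integral_normed hf (fun x _ => by simpa using hC x)

lemma exists_contDiff_hasCompactSupport_tendsto_ae {f : E → F} (hf : AEStronglyMeasurable f μ)
    {C : ℝ} (hC : ∀ x, ‖f x‖ ≤ C) :
    ∃ ψ : ℕ → E → F, (∀ n, ContDiff ℝ ∞ (ψ n)) ∧ (∀ n, HasCompactSupport (ψ n)) ∧
      (∀ n x, ‖ψ n x‖ ≤ C) ∧ ∀ᵐ x ∂μ, Tendsto (fun n => ψ n x) atTop (𝓝 (f x)) := by
  let ρ : ℕ → ContDiffBump (0 : E) := fun n =>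
    ⟨1 / (n + 1), 2 / (n + 1), by positivity, by gcongr; norm_num⟩
  let χ : ℕ → ContDiffBump (0 : E) := fun n => ⟨n + 1, n + 2, by positivity, by linarith⟩
  have hloc : LocallyIntegrable f μ :=
    (memLp_top_of_bound hf C (ae_of_all _ hC)).locallyIntegrable le_top
  refine ⟨fun n => ⇑(χ n) • ((ρ n).normed μ ⋆[lsmul ℝ ℝ, μ] f), fun n => ?_, fun n => ?_,
    fun n x => ?_, ?_⟩
  · exact (χ n).contDiff.smul
      ((ρ n).hasCompactSupport_normed.contDiff_convolution_left _ (ρ n).contDiff_normed hloc)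
  · exact (χ n).hasCompactSupport.smul_right
  · show ‖χ n x • ((ρ n).normed μ ⋆[lsmul ℝ ℝ, μ] f) x‖ ≤ C
    rw [norm_smul, Real.norm_of_nonneg (χ n).nonneg]
    exact (mul_le_of_le_one_left (norm_nonneg _) (χ n).le_one).trans
      ((ρ n).norm_normed_convolution_le hf hC x)
  · have hρ : Tendsto (fun n => (ρ n).rOut) atTop (𝓝 0) := by
      refine ((tendsto_const_div_atTop_nhds_zero_nat (2 : ℝ)).comp
        (tendsto_add_atTop_nat 1)).congr fun n => ?_
      simp [ρ]
    have hK : ∀ n, (ρ n).rOut ≤ 2 * (ρ n).rIn := fun n => le_of_eq <| by simp only [ρ]; ring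
    filter_upwards [ContDiffBump.ae_convolution_tendsto_right_of_locallyIntegrable hρ
      (Eventually.of_forall hK) hloc] with x hx
    have hχ : Tendsto (fun n => χ n x) atTop (𝓝 1) := by
      refine tendsto_const_nhds.congr' ?_
      filter_upwards [eventually_ge_atTop ⌈‖x‖⌉₊] with n hn
      refine ((χ n).one_of_mem_closedBall ?_).symm
      rw [mem_closedBall_zero_iff]
      exact (Nat.le_of_ceil_le hn).trans (by simp [χ])
    simpa using hχ.smul hx

end Approximation

lemma tendsto_integral_mul_of_tendsto_ae {α 𝕜 : Type*} [MeasurableSpace α] {μ : Measure α}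
    [RCLike 𝕜] {g : α → 𝕜} (hg : Integrable g μ) {ψ : ℕ → α → 𝕜}
    (hψ : ∀ n, AEStronglyMeasurable (ψ n) μ) {C : ℝ} (hC : ∀ n x, ‖ψ n x‖ ≤ C) {h : α → 𝕜}
    (hlim : ∀ᵐ x ∂μ, Tendsto (fun n => ψ n x) atTop (𝓝 (h x))) :
    Tendsto (fun n => ∫ x, g x * ψ n x ∂μ) atTop (𝓝 (∫ x, g x * h x ∂μ)) := by
  refine tendsto_integral_of_dominated_convergence (fun x => ‖g x‖ * C)
    (fun n => hg.aestronglyMeasurable.mul (hψ n)) (hg.norm.mul_const C)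
    (fun n => ae_of_all _ fun x => ?_) ?_
  · rw [norm_mul]
    exact mul_le_mul_of_nonneg_left (hC n x) (norm_nonneg _)
  · filter_upwards [hlim] with x hx using hx.const_mul (g x)

lemma FT_eq_fourier (d : ℕ) (f : EuclideanSpace ℝ (Fin d) → ℂ) (ξ : EuclideanSpace ℝ (Fin d)) :
    FT d f ξ = (2 * Real.pi : ℂ) ^ (-(d : ℂ) / 2) * 𝓕 f ((2 * Real.pi)⁻¹ • ξ) := by
  rw [FT, Real.fourier_eq']
  congr 2 with x
  rw [real_inner_smul_right, smul_eq_mul]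
  congr 2
  push_cast
  field_simp

lemma exists_schwartz_FT_eq {d : ℕ} (ψ : SchwartzMap (EuclideanSpace ℝ (Fin d)) ℂ) :
    ∃ φ : SchwartzMap (EuclideanSpace ℝ (Fin d)) ℂ, ∀ ξ, FT d (fun x => φ x) ξ = ψ ξ := by
  set c : ℂ := (2 * Real.pi : ℂ) ^ (-(d : ℂ) / 2)
  have hc : c ≠ 0 := by simp [c, Real.pi_ne_zero]
  have h2π : (2 * Real.pi : ℝ) ≠ 0 := by positivity
  let e := (LinearEquiv.smulOfNeZero ℝ (EuclideanSpace ℝ (Fin d)) _ h2π).toContinuousLinearEquiv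
  refine ⟨𝓕⁻ (c⁻¹ • SchwartzMap.compCLMOfContinuousLinearEquiv ℝ e ψ), fun ξ => ?_⟩
  rw [FT_eq_fourier, ← SchwartzMap.fourier_coe, FourierTransform.fourier_fourierInv_eq]
  have hscale : (Real.pi⁻¹ * 2⁻¹ * (2 * Real.pi)) = 1 := by field_simp
  change c * _ = _
  simp [e, smul_smul, hscale, hc]

theorem test_function_selection_general (d : ℕ) (g : EuclideanSpace ℝ (Fin d) → ℂ)
    (hg1 : Integrable g volume) :
    ∃ (φ : ℕ → SchwartzMap (EuclideanSpace ℝ (Fin d)) ℂ) (Cb : ℝ),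
      (∀ n ξ, ‖FT d (fun x => φ n x) ξ‖ ≤ Cb) ∧
      Tendsto (fun n : ℕ => ∫ x, g x * FT d (fun y => φ n y) x) atTop
        (nhds (((∫ x, ‖g x‖) : ℝ) : ℂ)) := by
  obtain ⟨ψ, hsmooth, hsupp, hbound, hlim⟩ := exists_contDiff_hasCompactSupport_tendsto_ae
    (μ := volume) (measurable_conjSign.comp_aemeasurable hg1.aemeasurable).aestronglyMeasurable
    (fun x => norm_conjSign_le_one (g x))
  choose φ hφ using fun n => exists_schwartz_FT_eq ((hsupp n).toSchwartzMap (hsmooth n))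
  refine ⟨φ, 1, fun n ξ => by simpa [hφ] using hbound n ξ, ?_⟩
  have hnorm : ((∫ x, ‖g x‖ : ℝ) : ℂ) = ∫ x, g x * conjSign (g x) := by
    simp only [mul_conjSign, integral_complex_ofReal]
  simp only [hφ, HasCompactSupport.toSchwartzMap_toFun, hnorm]
  exact tendsto_integral_mul_of_tendsto_ae hg1
    (fun n => (hsmooth n).continuous.aestronglyMeasurable) hbound hlim

/-- For `g ∈ L¹ ∩ L²` there are Schwartz functions `φ_n` whose Fourier transforms are
uniformly bounded in `L^∞` with `∫ g · 𝓕φ_n → ‖g‖_{L¹}`. -/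
theorem test_function_selection (d : ℕ) (g : EuclideanSpace ℝ (Fin d) → ℂ)
    (hg1 : Integrable g volume) (hg2 : MemLp g 2 volume) :
    ∃ (φ : ℕ → SchwartzMap (EuclideanSpace ℝ (Fin d)) ℂ) (Cb : ℝ),
      (∀ n ξ, ‖FT d (fun x => φ n x) ξ‖ ≤ Cb) ∧
      Tendsto (fun n : ℕ => ∫ x, g x * FT d (fun y => φ n y) x) atTop
        (nhds (((∫ x, ‖g x‖) : ℝ) : ℂ)) :=
  test_function_selection_general d g hg1
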